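/- Let d ≥ 1 be an integer and let Z = {P₀,…,P_d} be d+1 pairwise non-proportional nonzero vectors in ℂ³. Let Q ∈ ℂ³ be nonzero and suppose there exists a nonzero homogeneous polynomial F ∈ ℂ[x₀,x₁,x₂] of degree d with F(Pᵢ) = 0 for all i and F vanishing to order at least d at Q. Then there exist indices i ≠ j such that Q lies in the linear span of Pᵢ and P_j in ℂ³. -/

import Mathlib

/-!
Vanishing to order `d` at `Q` makes a form `F` of degree `d` a cone with vertex `Q`: the Taylor
coefficients of `t ↦ F (Q + t • y)` below `t ^ d` are directional derivatives of order `< d` at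
`Q`, so `F (Q + t • y) = t ^ d * F y`, i.e. `F (a • Q + z) = F z`. If `Q` lay on no secant,
then `Q, P₀, P₁` would span `ℂ³`, and projecting every `Pᵢ` from `Q` into the plane
`⟨P₀, P₁⟩` would give `d + 1` pairwise non-proportional zeros of the binary form `F|⟨P₀, P₁⟩`.
That form then vanishes, so by the cone property `F` vanishes everywhere.
-/

open MvPolynomial

/-- Iterated partial derivative of `F` with respect to the multi-index `α`:
`∂₀^{α 0} ∂₁^{α 1} ∂₂^{α 2} F`. -/
noncomputable def pd (α : Fin 3 → ℕ) (F : MvPolynomial (Fin 3) ℂ) : MvPolynomial (Fin 3) ℂ :=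
  (fun G : MvPolynomial (Fin 3) ℂ => pderiv (0 : Fin 3) G)^[α 0]
    ((fun G : MvPolynomial (Fin 3) ℂ => pderiv (1 : Fin 3) G)^[α 1]
      ((fun G : MvPolynomial (Fin 3) ℂ => pderiv (2 : Fin 3) G)^[α 2] F))

/-- `F` vanishes to order at least `m` at `B`: every iterated partial derivative of `F`
of total order at most `m - 1` vanishes at `B`. -/
def ordGe (m : ℕ) (B : Fin 3 → ℂ) (F : MvPolynomial (Fin 3) ℂ) : Prop :=
  ∀ α : Fin 3 → ℕ, α 0 + α 1 + α 2 < m → MvPolynomial.eval B (pd α F) = 0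

namespace Polynomial

variable {R : Type*} [CommSemiring R]

theorem coeff_prod_sum_of_natDegree_le {ι : Type*} (s : Finset ι) (f : ι → R[X]) (n : ι → ℕ)
    (h : ∀ i ∈ s, (f i).natDegree ≤ n i) :
    (∏ i ∈ s, f i).coeff (∑ i ∈ s, n i) = ∏ i ∈ s, (f i).coeff (n i) := by
  classical
  induction s using Finset.induction_on with
  | empty => simp
  | insert a s ha ih =>
    rw [Finset.forall_mem_insert] at h
    rw [Finset.prod_insert ha, Finset.sum_insert ha, Finset.prod_insert ha,
      coeff_mul_add_eq_of_natDegree_le h.1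
        ((natDegree_prod_le _ _).trans (Finset.sum_le_sum h.2)), ih h.2]

theorem natDegree_linear_pow_le (a b : R) (k : ℕ) : ((C a * X + C b) ^ k).natDegree ≤ k := by
  simpa using natDegree_pow_le_of_le k natDegree_linear_le

end Polynomial

namespace MvPolynomial

variable {σ R K : Type*}

theorem IsHomogeneous.eval_smul [CommSemiring R] {F : MvPolynomial σ R} {n : ℕ}
    (hF : F.IsHomogeneous n) (c : R) (x : σ → R) :
    eval (c • x) F = c ^ n * eval x F := by
  rw [eval_eq, eval_eq, Finset.mul_sum]
  refine Finset.sum_congr rfl fun s hs => ?_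
  simp only [Pi.smul_apply, smul_eq_mul, mul_pow, Finset.prod_mul_distrib,
    Finset.prod_pow_eq_pow_sum, ← hF.degree_eq_sum_deg_support hs]
  ring

theorem pderiv_comm [CommSemiring R] (i j : σ) (F : MvPolynomial σ R) :
    pderiv i (pderiv j F) = pderiv j (pderiv i F) := by
  ext m
  simp only [coeff_pderiv, Finsupp.add_apply]
  rw [add_right_comm m]
  rcases eq_or_ne i j with rfl | hij
  · rfl
  · rw [Finsupp.single_eq_of_ne hij, Finsupp.single_eq_of_ne hij.symm, add_zero, add_zero]
    ring

section restrictLine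

variable [CommRing R]

noncomputable def restrictLine (x y : σ → R) (F : MvPolynomial σ R) : Polynomial R :=
  aeval (fun i => Polynomial.C (y i) * Polynomial.X + Polynomial.C (x i)) F

theorem eval_restrictLine (x y : σ → R) (F : MvPolynomial σ R) (t : R) :
    (restrictLine x y F).eval t = eval (x + t • y) F := by
  rw [restrictLine, ← Polynomial.coe_aeval_eq_eval, comp_aeval_apply]
  simp only [map_add, map_mul, Polynomial.aeval_C, Polynomial.aeval_X,
    Algebra.algebraMap_self, RingHom.id_apply, aeval_eq_eval]
  congr 2
  funext i
  simp [add_comm, mul_comm]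

theorem IsHomogeneous.natDegree_restrictLine_le {F : MvPolynomial σ R} {n : ℕ}
    (hF : F.IsHomogeneous n) (x y : σ → R) : (restrictLine x y F).natDegree ≤ n := by
  rw [restrictLine, F.as_sum, map_sum]
  refine Polynomial.natDegree_sum_le_of_forall_le _ _ fun s hs => ?_
  rw [aeval_monomial, ← Polynomial.C_eq_algebraMap, Finsupp.prod,
    hF.degree_eq_sum_deg_support hs]
  refine (Polynomial.natDegree_C_mul_le _ _).trans <| (Polynomial.natDegree_prod_le _ _).trans <|
    Finset.sum_le_sum fun i _ => ?_
  exact Polynomial.natDegree_linear_pow_le _ _ _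

theorem IsHomogeneous.coeff_restrictLine {F : MvPolynomial σ R} {n : ℕ}
    (hF : F.IsHomogeneous n) (x y : σ → R) : (restrictLine x y F).coeff n = eval y F := by
  rw [restrictLine, eval_eq]
  conv_lhs => rw [F.as_sum]
  rw [map_sum, Polynomial.finsetSum_coeff]
  refine Finset.sum_congr rfl fun s hs => ?_
  rw [aeval_monomial, ← Polynomial.C_eq_algebraMap, Finsupp.prod, Polynomial.coeff_C_mul,
    hF.degree_eq_sum_deg_support hs, Polynomial.coeff_prod_sum_of_natDegree_le _ _ (fun i => s i)
      fun i _ => Polynomial.natDegree_linear_pow_le (y i) (x i) (s i)]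
  congr 1
  refine Finset.prod_congr rfl fun i _ => ?_
  simpa using Polynomial.coeff_pow_of_natDegree_le (m := s i)
    (Polynomial.natDegree_linear_le (a := y i) (b := x i))

end restrictLine

theorem IsHomogeneous.eval_eq_zero_of_mem_span_pair [Field K] {F : MvPolynomial σ K} {n : ℕ}
    (hF : F.IsHomogeneous n) {u v : σ → K} (hu : eval u F = 0)
    (z : Fin n → σ → K) (hz : ∀ k, z k ∈ Submodule.span K {u, v}) (hzF : ∀ k, eval (z k) F = 0)
    (hzu : ∀ k (c : K), z k ≠ c • u) (hzz : ∀ k l, k ≠ l → ∀ c : K, z k ≠ c • z l)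
    {w : σ → K} (hw : w ∈ Submodule.span K {u, v}) : eval w F = 0 := by
  have hscale (a b : K) (hb : b ≠ 0) :
      eval (a • u + b • v) F = b ^ n * (restrictLine v u F).eval (a / b) := by
    rw [eval_restrictLine, ← hF.eval_smul, smul_add, smul_smul, mul_div_cancel₀ a hb, add_comm]
  choose s t hst using fun k => Submodule.mem_span_pair.mp (hz k)
  have ht (k : Fin n) : t k ≠ 0 := fun htk => hzu k (s k) (by simp [← hst k, htk])
  have hroot (k : Fin n) : (restrictLine v u F).eval (s k / t k) = 0 := by
    have := hscale (s k) (t k) (ht k)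
    rwa [hst, hzF, eq_comm, mul_eq_zero, or_iff_right (pow_ne_zero n (ht k))] at this
  have hinj : Function.Injective fun k => s k / t k := by
    intro k l hkl
    by_contra hne
    refine hzz k l hne (t k / t l) ?_
    rw [← hst k, ← hst l, smul_add, smul_smul, smul_smul, div_mul_cancel₀ _ (ht l)]
    rw [div_eq_div_iff (ht k) (ht l)] at hkl
    congr 2
    field_simp [ht l]
    linear_combination hkl
  -- `t ↦ F (v + t • u)` has the `n` roots `s k / t k`, and degree `< n` because `F u = 0`.
  have hf : restrictLine v u F = 0 := by
    by_contra hf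
    refine hf (Polynomial.eq_zero_of_natDegree_lt_card_of_eval_eq_zero _ hinj hroot ?_)
    rw [Fintype.card_fin]
    refine (hF.natDegree_restrictLine_le v u).lt_of_ne fun hdeg => hf ?_
    rw [← Polynomial.leadingCoeff_eq_zero, Polynomial.leadingCoeff, hdeg, hF.coeff_restrictLine,
      hu]
  obtain ⟨a, b, rfl⟩ := Submodule.mem_span_pair.mp hw
  rcases eq_or_ne b 0 with rfl | hb
  · simp [hF.eval_smul, hu]
  · rw [hscale a b hb, hf, Polynomial.eval_zero, mul_zero]

section dirDeriv

variable [CommRing R] [Fintype σ]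

noncomputable def dirDeriv (y : σ → R) : Derivation R (MvPolynomial σ R) (MvPolynomial σ R) :=
  ∑ i, y i • pderiv i

theorem dirDeriv_apply (y : σ → R) (F : MvPolynomial σ R) :
    dirDeriv y F = ∑ i, y i • pderiv i F := by
  rw [dirDeriv, ← Derivation.coeFnAddMonoidHom_apply, map_sum, Finset.sum_apply]
  rfl

theorem dirDeriv_X (y : σ → R) (i : σ) : dirDeriv y (X i) = C (y i) := by
  classical
  simp [dirDeriv_apply, pderiv_X, Pi.single_apply, smul_eq_C_mul]

theorem derivative_restrictLine (x y : σ → R) (F : MvPolynomial σ R) :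
    Polynomial.derivative (restrictLine x y F) = restrictLine x y (dirDeriv y F) := by
  induction F using MvPolynomial.induction_on with
  | C a => simp [restrictLine]
  | add p q hp hq => simp only [restrictLine, map_add] at *; rw [hp, hq]
  | mul_X p i ih =>
    simp only [restrictLine, map_mul, Derivation.leibniz, map_add, smul_eq_mul, aeval_X,
      dirDeriv_X, aeval_C, Polynomial.algebraMap_eq, Polynomial.derivative_mul,
      Polynomial.derivative_C, Polynomial.derivative_X] at *
    rw [ih]
    ring

theorem iterate_derivative_restrictLine (x y : σ → R) (F : MvPolynomial σ R) (k : ℕ) :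
    Polynomial.derivative^[k] (restrictLine x y F) = restrictLine x y ((dirDeriv y)^[k] F) := by
  induction k with
  | zero => rfl
  | succ k ih =>
    rw [Function.iterate_succ_apply', ih, derivative_restrictLine, Function.iterate_succ_apply']

end dirDeriv

end MvPolynomial

theorem pd_def (α : Fin 3 → ℕ) (F : MvPolynomial (Fin 3) ℂ) :
    pd α F = (pderiv 0)^[α 0] ((pderiv 1)^[α 1] ((pderiv 2)^[α 2] F)) :=
  rfl

theorem pd_eq_end (α : Fin 3 → ℕ) :
    pd α = ⇑((pderiv 0).toLinearMap ^ α 0 * (pderiv 1).toLinearMap ^ α 1 *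
      (pderiv 2).toLinearMap ^ α 2 : Module.End ℂ (MvPolynomial (Fin 3) ℂ)) := by
  funext F
  simp [pd_def, Module.End.coe_pow]

theorem pd_pderiv (α : Fin 3 → ℕ) (i : Fin 3) (F : MvPolynomial (Fin 3) ℂ) :
    pd α (pderiv i F) = pd (α + Pi.single i 1) F := by
  have hc (i j : Fin 3) (n : ℕ) (G : MvPolynomial (Fin 3) ℂ) :
      pderiv i ((pderiv j)^[n] G) = (pderiv j)^[n] (pderiv i G) :=
    Function.Commute.iterate_right (fun G => pderiv_comm i j G) n G
  obtain rfl | rfl | rfl : i = 0 ∨ i = 1 ∨ i = 2 := by fin_cases i <;> simp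
  · rw [pd_def, ← hc 0 2, ← hc 0 1, ← Function.iterate_succ_apply]
    simp [pd_def]
  · rw [pd_def, ← hc 1 2, ← Function.iterate_succ_apply]
    simp [pd_def]
  · rw [pd_def, ← Function.iterate_succ_apply]
    simp [pd_def]

section ordGe

variable {m d : ℕ} {B : Fin 3 → ℂ} {F : MvPolynomial (Fin 3) ℂ}

theorem ordGe.eval_eq_zero (h : ordGe m B F) (hm : 0 < m) : eval B F = 0 :=
  h 0 hm

theorem ordGe_pderiv (h : ordGe (m + 1) B F) (i : Fin 3) : ordGe m B (pderiv i F) :=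
  fun α hα => by
    rw [pd_pderiv]
    refine h _ ?_
    fin_cases i <;> simp <;> omega

theorem ordGe_dirDeriv (h : ordGe (m + 1) B F) (y : Fin 3 → ℂ) : ordGe m B (dirDeriv y F) :=
  fun α hα => by
    rw [dirDeriv_apply, pd_eq_end, map_sum, map_sum]
    refine Finset.sum_eq_zero fun i _ => ?_
    rw [map_smul, ← pd_eq_end, smul_eval, ordGe_pderiv h i α hα, mul_zero]

theorem ordGe_iterate_dirDeriv (h : ordGe m B F) (y : Fin 3 → ℂ) {k : ℕ} (hk : k ≤ m) :
    ordGe (m - k) B ((dirDeriv y)^[k] F) := by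
  induction k with
  | zero => exact h
  | succ k ih =>
    have hk' : ordGe (m - (k + 1) + 1) B ((dirDeriv y)^[k] F) := by
      rw [show m - (k + 1) + 1 = m - k by omega]
      exact ih (by omega)
    rw [Function.iterate_succ_apply']
    exact ordGe_dirDeriv hk' y

theorem ordGe.coeff_restrictLine_eq_zero (h : ordGe m B F) (y : Fin 3 → ℂ) {k : ℕ}
    (hk : k < m) : (restrictLine B y F).coeff k = 0 := by
  have := Polynomial.coeff_iterate_derivative (k := k) (restrictLine B y F) 0
  rw [Polynomial.coeff_zero_eq_eval_zero, iterate_derivative_restrictLine, eval_restrictLine,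
    zero_smul, add_zero, (ordGe_iterate_dirDeriv h y hk.le).eval_eq_zero (by omega), zero_add,
    Nat.descFactorial_self, eq_comm, nsmul_eq_mul] at this
  exact (mul_eq_zero.mp this).resolve_left (by exact_mod_cast k.factorial_ne_zero)

theorem ordGe.restrictLine_eq (h : ordGe d B F) (hF : F.IsHomogeneous d) (y : Fin 3 → ℂ) :
    restrictLine B y F = Polynomial.C (eval y F) * Polynomial.X ^ d := by
  ext k
  rw [Polynomial.coeff_C_mul, Polynomial.coeff_X_pow]
  rcases lt_trichotomy k d with hk | rfl | hk
  · simp [h.coeff_restrictLine_eq_zero y hk, hk.ne]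
  · simp [hF.coeff_restrictLine]
  · rw [Polynomial.coeff_eq_zero_of_natDegree_lt ((hF.natDegree_restrictLine_le B y).trans_lt hk)]
    simp [hk.ne']

theorem ordGe.eval_add_smul (h : ordGe d B F) (hF : F.IsHomogeneous d) (y : Fin 3 → ℂ) (t : ℂ) :
    eval (B + t • y) F = t ^ d * eval y F := by
  rw [← eval_restrictLine, h.restrictLine_eq hF]
  simp only [Polynomial.eval_mul, Polynomial.eval_C, Polynomial.eval_pow, Polynomial.eval_X]
  ring

theorem ordGe.eval_smul_add (h : ordGe d B F) (hF : F.IsHomogeneous d) (a : ℂ) (z : Fin 3 → ℂ) :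
    eval (a • B + z) F = eval z F := by
  rcases eq_or_ne a 0 with rfl | ha
  · simp
  rw [show a • B + z = a • (B + a⁻¹ • z) by rw [smul_add, smul_inv_smul₀ ha], hF.eval_smul,
    h.eval_add_smul hF, ← mul_assoc, ← mul_pow, mul_inv_cancel₀ ha, one_pow, one_mul]

end ordGe

section LinearAlgebra

variable {K V : Type*} [Field K] [AddCommGroup V] [Module K V]

theorem eq_smul_or_mem_span_pair_of_eq_smul {p q Q x y : V} {a b c : K} (hp : p = a • Q + x)
    (hq : q = b • Q + y) (hxy : x = c • y) : p = c • q ∨ Q ∈ Submodule.span K {p, q} := by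
  rcases eq_or_ne a (c * b) with hab | hab
  · left
    rw [hp, hq, hxy, hab]
    module
  · right
    have hab' : a - c * b ≠ 0 := sub_ne_zero.mpr hab
    rw [Submodule.mem_span_pair]
    refine ⟨(a - c * b)⁻¹, -((a - c * b)⁻¹ * c), ?_⟩
    rw [hp, hq, hxy]
    match_scalars <;> field_simp <;> ring

theorem span_insert_pair_eq_top (hV : Module.finrank K V = 3) {Q u v : V}
    (huv : LinearIndependent K ![u, v]) (hQ : Q ∉ Submodule.span K {u, v}) :
    Submodule.span K {Q, u, v} = ⊤ := by
  have hli : LinearIndependent K ![Q, u, v] :=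
    linearIndependent_finCons.mpr ⟨huv, by simpa [Matrix.range_cons, Set.pair_comm] using hQ⟩
  have hrange : Set.range ![Q, u, v] = {Q, u, v} := by
    ext
    simp only [Matrix.range_cons, Matrix.range_empty, Set.mem_union, Set.mem_insert_iff,
      Set.mem_singleton_iff]
    tauto
  rw [← hrange]
  exact hli.span_eq_top_of_card_eq_finrank (by simp [hV])

end LinearAlgebra

theorem degeneracy_implies_on_secant_general (d : ℕ) (hd : 1 ≤ d)
    (P : Fin (d + 1) → (Fin 3 → ℂ))
    (hprop : ∀ i j, i ≠ j → ∀ c : ℂ, P i ≠ c • P j)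
    (Q : Fin 3 → ℂ)
    (F : MvPolynomial (Fin 3) ℂ) (hF0 : F ≠ 0) (hF : F.IsHomogeneous d)
    (hFZ : ∀ i, MvPolynomial.eval (P i) F = 0) (hFQ : ordGe d Q F) :
    ∃ i j, i ≠ j ∧ Q ∈ Submodule.span ℂ {P i, P j} := by
  by_contra! hsec
  have h01 : (0 : Fin (d + 1)) ≠ 1 := Fin.ne_of_val_ne (by simp [Nat.mod_eq_of_lt]; omega)
  have hP01 : LinearIndependent ℂ ![P 0, P 1] :=
    (LinearIndependent.pair_iff' (by simpa using hprop 0 1 h01 0)).mpr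
      fun c h => hprop 1 0 h01.symm c h.symm
  have htop := span_insert_pair_eq_top (by simp) hP01 (hsec 0 1 h01)
  have hdecomp (v : Fin 3 → ℂ) : ∃ a : ℂ, ∃ z ∈ Submodule.span ℂ {P 0, P 1}, v = a • Q + z :=
    Submodule.mem_span_insert.mp (htop ▸ Submodule.mem_top)
  choose a z hz hPz using fun i => hdecomp (P i)
  have hne (i j : Fin (d + 1)) (hij : i ≠ j) (y : Fin 3 → ℂ) (b c : ℂ) (hy : P j = b • Q + y) :
      z i ≠ c • y := fun h =>
    (eq_smul_or_mem_span_pair_of_eq_smul (hPz i) hy h).elim (hprop i j hij c) (hsec i j hij)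
  have hplane (w : Fin 3 → ℂ) (hw : w ∈ Submodule.span ℂ {P 0, P 1}) : eval w F = 0 :=
    hF.eval_eq_zero_of_mem_span_pair (hFZ 0) (fun k => z k.succ) (fun k => hz k.succ)
      (fun k => by rw [← hFQ.eval_smul_add hF (a k.succ), ← hPz, hFZ])
      (fun k c => hne _ 0 (Fin.succ_ne_zero k) (P 0) 0 c (by simp))
      (fun k l hkl c => hne _ _ (Fin.succ_injective _ |>.ne hkl) _ (a l.succ) c (hPz _)) hw
  refine hF0 (hF.eq_zero_of_forall_eval_eq_zero fun v => ?_)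
  obtain ⟨b, w, hw, rfl⟩ := hdecomp v
  rw [hFQ.eval_smul_add hF, hplane w hw]

/-- If there is a nonzero homogeneous polynomial of degree `d` vanishing at `d + 1`
pairwise non-proportional nonzero points and to order at least `d` at a nonzero point `Q`,
then `Q` lies in the linear span of two of the points. -/
theorem degeneracy_implies_on_secant (d : ℕ) (hd : 1 ≤ d)
    (P : Fin (d + 1) → (Fin 3 → ℂ)) (hP0 : ∀ i, P i ≠ 0)
    (hprop : ∀ i j, i ≠ j → ∀ c : ℂ, P i ≠ c • P j)
    (Q : Fin 3 → ℂ) (hQ : Q ≠ 0)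
    (F : MvPolynomial (Fin 3) ℂ) (hF0 : F ≠ 0) (hF : F.IsHomogeneous d)
    (hFZ : ∀ i, MvPolynomial.eval (P i) F = 0) (hFQ : ordGe d Q F) :
    ∃ i j, i ≠ j ∧ Q ∈ Submodule.span ℂ {P i, P j} :=
  degeneracy_implies_on_secant_general d hd P hprop Q F hF0 hF hFZ hFQ
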